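/- Let P be a perfect-tree forcing notion. (a) There exists a sequence ⟨φ_n⟩_{n<ω} of finite splitting systems over P in which each φ_{n+1} properly extends φ_n. (b) For any such sequence, the limit system φ = ⋃_n φ_n is a family ⟨T_s⟩_{s∈2^<ω} of trees in P satisfying T_{s⌢i} ⊆ (T_s)→i for all s ∈ 2^<ω and i ∈ {0,1}; the set T = ⋂_n ⋃_{s∈2^n} T_s is a perfect tree; [T] = ⋂_n ⋃_{s∈2^n}[T_s]; and for every u ∈ 2^<ω, T→u = T ∩ T_u = ⋂_{n≥|u|} ⋃_{s∈2^n, u⊆s} T_s. -/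

import Mathlib

noncomputable section

/-- Finite binary strings. -/
abbrev Str : Type := List Bool

/-- Points of Cantor space `2^ω`. -/
abbrev Pt : Type := ℕ → Bool

/-- The length-`n` initial segment of a point of Cantor space, as a string. -/
def seg (a : Pt) (n : ℕ) : Str := (List.range n).map a

/-- A tree: a set of strings closed under initial segments. -/
def IsTree (T : Set Str) : Prop := ∀ ⦃s t : Str⦄, s <+: t → t ∈ T → s ∈ T

/-- A perfect tree: a nonempty tree in which every string has two
incomparable extensions inside the tree. -/
def IsPerfectTree (T : Set Str) : Prop :=
  T.Nonempty ∧ IsTree T ∧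
    ∀ s ∈ T, ∃ t₁ t₂, t₁ ∈ T ∧ t₂ ∈ T ∧ s <+: t₁ ∧ s <+: t₂ ∧ ¬ t₁ <+: t₂ ∧ ¬ t₂ <+: t₁

/-- The restriction `T↾s = {t ∈ T : s ⊆ t or t ⊆ s}`. -/
def Tres (T : Set Str) (s : Str) : Set Str := {t ∈ T | s <+: t ∨ t <+: s}

/-- The set `[T]` of branches of a tree `T`. -/
def branches (T : Set Str) : Set Pt := {a | ∀ n, seg a n ∈ T}

/-- `s` is the stem (root) of `T`: the longest `s ∈ T` with `T = T↾s`. -/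
def IsStem (T : Set Str) (s : Str) : Prop :=
  s ∈ T ∧ T = Tres T s ∧ ∀ t ∈ T, T = Tres T t → t <+: s

open Classical in
/-- The stem `root(T)` of a tree (junk value `[]` if there is none). -/
def stem (T : Set Str) : Str := if h : ∃ s, IsStem T s then h.choose else []

/-- Simple splitting `T→i = T↾(root(T)⌢i)`. -/
def splitOne (T : Set Str) (i : Bool) : Set Str := Tres T (stem T ++ [i])

/-- Iterated splitting `T→u`. -/
def splitIter (T : Set Str) (u : Str) : Set Str := u.foldl splitOne T

/-- Almost disjointness of trees: finite intersection. -/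
def AD (S T : Set Str) : Prop := (S ∩ T).Finite

/-- A perfect-tree forcing notion: a nonempty set of perfect trees closed
under restrictions. -/
def IsPTF (P : Set (Set Str)) : Prop :=
  P.Nonempty ∧ (∀ T ∈ P, IsPerfectTree T) ∧ ∀ T ∈ P, ∀ s ∈ T, Tres T s ∈ P

/-- `A` is relatively clopen in `B` (as a subspace of Cantor space). -/
def ClopenIn (A B : Set Pt) : Prop := IsClopen ((fun x : B => (x : Pt)) ⁻¹' A)

/-- `A` is relatively open in `B` (as a subspace of Cantor space). -/
def OpenIn (A B : Set Pt) : Prop := IsOpen ((fun x : B => (x : Pt)) ⁻¹' A)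

/-- A special perfect-tree forcing notion: `P = {T↾s : s ∈ T ∈ A}` for an
antichain (pairwise a.d. set) `A ⊆ P`. -/
def SpecialPTF (P : Set (Set Str)) : Prop :=
  ∃ A ⊆ P, A.Pairwise AD ∧ P = {R | ∃ T ∈ A, ∃ s ∈ T, R = Tres T s}

/-- A regular perfect-tree forcing notion: `[S] ∩ [T]` is relatively clopen
in `[S]` or in `[T]`, for all `S, T ∈ P`. -/
def RegularPTF (P : Set (Set Str)) : Prop :=
  ∀ S ∈ P, ∀ T ∈ P,
    ClopenIn (branches S ∩ branches T) (branches S) ∨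
    ClopenIn (branches S ∩ branches T) (branches T)

/-- `T ⊆ᶠ ⋃ D`: `[T]` is covered by finitely many `[S]`, `S ∈ D`. -/
def SqFin (T : Set Str) (D : Set (Set Str)) : Prop :=
  ∃ D' ⊆ D, D'.Finite ∧ branches T ⊆ ⋃ S ∈ D', branches S

/-- `P ⊑ Q`: `Q` is a refinement of `P`. -/
def Refines (P Q : Set (Set Str)) : Prop :=
  (∀ T ∈ P, ∃ S ∈ Q, S ⊆ T) ∧
  (∀ S ∈ Q, SqFin S P) ∧
  (∀ S ∈ Q, ∀ T ∈ P, ClopenIn (branches S ∩ branches T) (branches S) ∧ ¬ T ⊆ S)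

/-- `D` is dense in `P`. -/
def DenseIn (D P : Set (Set Str)) : Prop := ∀ T ∈ P, ∃ S ∈ D, S ⊆ T

/-- `D` is pre-dense in `P`. -/
def PreDenseIn (D P : Set (Set Str)) : Prop :=
  DenseIn {T ∈ P | ∃ S ∈ D, T ⊆ S} P

/-- `P ⊑_D Q`: `Q` locks `D` over `P`. -/
def Locks (P D Q : Set (Set Str)) : Prop :=
  Refines P Q ∧ ∀ S ∈ Q, SqFin S D

/-- A finite splitting system of height `n` over `P`. -/
def IsFSS (P : Set (Set Str)) (n : ℕ) (φ : Str → Set Str) : Prop :=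
  (∀ s : Str, s.length ≤ n → φ s ∈ P) ∧
  ∀ (s : Str) (i : Bool), s.length < n → φ (s ++ [i]) ⊆ splitOne (φ s) i

/-!
Along a splitting system the stems grow: `stem (ψ s) ⌢ i` is an initial segment of
`stem (ψ (s ⌢ i))`. So the fusion tree `T = ⋂ₙ ⋃_{|s|=n} ψ s` contains every stem, and a node
of `T` extending `stem (ψ s) ⌢ i` lies in `ψ (s ⌢ i)`: every other tree `ψ s'` with
`|s'| = |s| + 1` has split away from it at the stem of `ψ r`, `r` the branch point of `s ⌢ i`
and `s'`. Hence `T ∩ ψ u` is a tree with stem `stem (ψ u)` whose `i`-th splitting is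
`T ∩ ψ (u ⌢ i)`, and `T→u = T ∩ ψ u` follows by induction on `u`; the same observation lets a
branch of `T` pick its way through the levels `⋃_{|s|=n} [ψ s]`.
-/

namespace List

variable {α : Type*}

theorem eq_of_append_singleton_prefix {x y z : List α} {i j : α} (hx : x ++ [i] <+: z)
    (hy : y ++ [j] <+: z) (hl : x.length = y.length) : x = y ∧ i = j := by
  rw [← append_singleton_inj]
  rcases prefix_or_prefix_of_prefix hx hy with h | h
  · exact h.eq_of_length (by simp [hl])
  · exact (h.eq_of_length (by simp [hl])).symm

theorem exists_append_singleton_prefix {s t : List α} (h : s <+: t) (hts : ¬ t <+: s) :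
    ∃ b, s ++ [b] <+: t := by
  obtain ⟨_ | ⟨b, r⟩, rfl⟩ := h
  · simp at hts
  · exact ⟨b, r, by simp⟩

theorem exists_branch_point :
    ∀ {x y : List α}, ¬ x <+: y → ¬ y <+: x → ∃ r i j, i ≠ j ∧ r ++ [i] <+: x ∧ r ++ [j] <+: y
  | [], _, h, _ => absurd nil_prefix h
  | _ :: _, [], _, h => absurd nil_prefix h
  | a :: x, c :: y, hxy, hyx => by
    by_cases hac : a = c
    · subst hac
      obtain ⟨r, i, j, hij, hi, hj⟩ :=
        exists_branch_point (x := x) (y := y) (by simpa using hxy) (by simpa using hyx)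
      exact ⟨a :: r, i, j, hij, by simpa using hi, by simpa using hj⟩
    · exact ⟨[], a, c, hac, ⟨x, rfl⟩, ⟨y, rfl⟩⟩

end List

open List

@[simp]
theorem length_seg (a : Pt) (n : ℕ) : (seg a n).length = n := by simp [seg]

theorem seg_prefix_seg (a : Pt) {m n : ℕ} (h : m ≤ n) : seg a m <+: seg a n := by
  have : range m <+: range n := by
    rw [← Nat.min_eq_left h, ← take_range]
    exact take_prefix _ _
  exact this.map a

theorem seg_succ (a : Pt) (n : ℕ) : seg a (n + 1) = seg a n ++ [a n] := by
  simp [seg, range_succ]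

theorem tres_eq_self {T : Set Str} {s : Str} (h : ∀ t ∈ T, s <+: t ∨ t <+: s) :
    Tres T s = T :=
  Set.sep_eq_self_iff_mem_true.mpr h

theorem IsStem.stem_eq {T : Set Str} {s : Str} (h : IsStem T s) : stem T = s := by
  have hex : ∃ s, IsStem T s := ⟨s, h⟩
  have hc := hex.choose_spec
  rw [stem, dif_pos hex]
  exact (h.2.2 _ hc.1 hc.2.1).eq_of_length_le (hc.2.2 _ h.1 h.2.1).length_le

theorem isStem_of_append_mem {T : Set Str} {s : Str} (hs : s ∈ T)
    (hcomp : ∀ t ∈ T, s <+: t ∨ t <+: s) (hchild : ∀ i, s ++ [i] ∈ T) : IsStem T s := by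
  refine ⟨hs, (tres_eq_self hcomp).symm, fun t ht hres => ?_⟩
  refine (hcomp t ht).elim (fun hst => ?_) id
  by_contra hts
  obtain ⟨b, hb⟩ := exists_append_singleton_prefix hst hts
  rcases (hres ▸ hchild (!b)).2 with h | h
  · exact Bool.eq_not_self b |>.mp (eq_of_append_singleton_prefix (hb.trans h) prefix_rfl rfl).2
  · exact Bool.eq_not_self b |>.mp (eq_of_append_singleton_prefix hb h rfl).2

namespace IsPerfectTree

variable {T : Set Str} (hT : IsPerfectTree T)
include hT

theorem nil_mem : ([] : Str) ∈ T :=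
  hT.1.elim fun _ ht => hT.2.1 nil_prefix ht

theorem exists_length_le (n : ℕ) : ∃ t ∈ T, n ≤ t.length := by
  induction n with
  | zero => exact ⟨[], hT.nil_mem, le_rfl⟩
  | succ n ih =>
    obtain ⟨t, ht, hn⟩ := ih
    obtain ⟨t₁, t₂, h₁, -, p₁, p₂, h₁₂, -⟩ := hT.2.2 t ht
    refine ⟨t₁, h₁, lt_of_le_of_lt hn (lt_of_le_of_ne p₁.length_le fun hl => ?_)⟩
    exact h₁₂ (p₁.eq_of_length hl ▸ p₂)

theorem exists_isStem : ∃ s, IsStem T s := by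
  classical
  obtain ⟨t₁, t₂, h₁, h₂, -, -, h₁₂, h₂₁⟩ := hT.2.2 [] hT.nil_mem
  -- a string comparable with all of `T` cannot lie above both of the incomparable `t₁, t₂`
  have bound : ∀ s ∈ T, T = Tres T s → s.length ≤ max t₁.length t₂.length := by
    intro s _ hres
    rcases (hres ▸ h₁).2 with c₁ | c₁
    · exact c₁.length_le.trans (le_max_left _ _)
    rcases (hres ▸ h₂).2 with c₂ | c₂
    · exact c₂.length_le.trans (le_max_right _ _)
    rcases prefix_or_prefix_of_prefix c₁ c₂ with h | h
    exacts [absurd h h₁₂, absurd h h₂₁]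
  let Q (n : ℕ) : Prop := ∃ s, (s ∈ T ∧ T = Tres T s) ∧ s.length = n
  obtain ⟨s, ⟨hs, hres⟩, hl⟩ := Nat.findGreatest_spec (P := Q) (Nat.zero_le _)
    ⟨[], ⟨hT.nil_mem, (tres_eq_self fun _ _ => Or.inl nil_prefix).symm⟩, rfl⟩
  refine ⟨s, hs, hres, fun t ht htres => ?_⟩
  have hle : t.length ≤ s.length :=
    hl ▸ Nat.le_findGreatest (bound t ht htres) ⟨t, ⟨ht, htres⟩, rfl⟩
  rcases (htres ▸ hs).2 with h | h
  · exact h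
  · exact (h.eq_of_length_le hle) ▸ prefix_rfl

theorem isStem_stem : IsStem T (stem T) := by
  obtain ⟨s, hs⟩ := hT.exists_isStem
  exact hs.stem_eq ▸ hs

theorem stem_mem : stem T ∈ T := hT.isStem_stem.1

theorem prefix_stem_or_stem_prefix {t : Str} (ht : t ∈ T) : t <+: stem T ∨ stem T <+: t :=
  (hT.isStem_stem.2.1 ▸ ht).2.symm

theorem stem_append_mem (i : Bool) : stem T ++ [i] ∈ T := by
  by_contra hi
  -- otherwise every node above the stem passes through `stem T ⌢ !i`, a longer stem
  have hpass : ∀ r ∈ T, ¬ r <+: stem T → stem T ++ [!i] <+: r := by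
    intro r hr hrs
    obtain ⟨c, hc⟩ :=
      exists_append_singleton_prefix ((hT.prefix_stem_or_stem_prefix hr).resolve_left hrs) hrs
    obtain rfl : c = !i := Bool.eq_not_of_ne fun hci => hi (hci ▸ hT.2.1 hc hr)
    exact hc
  obtain ⟨t, ht, hlen⟩ := hT.exists_length_le ((stem T).length + 1)
  have hmem : stem T ++ [!i] ∈ T :=
    hT.2.1 (hpass t ht fun h => by have := h.length_le; omega) ht
  have hres : Tres T (stem T ++ [!i]) = T := tres_eq_self fun r hr =>
    if h : r <+: stem T then Or.inr (h.trans (prefix_append _ _)) else Or.inl (hpass r hr h)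
  have := (hT.isStem_stem.2.2 _ hmem hres.symm).length_le
  simp at this

theorem seg_stem_of_mem_branches {a : Pt} (ha : a ∈ branches T) :
    seg a (stem T).length = stem T := by
  rcases hT.prefix_stem_or_stem_prefix (ha _) with h | h
  · exact h.eq_of_length (length_seg _ _)
  · exact (h.eq_of_length (length_seg _ _).symm).symm

end IsPerfectTree

theorem splitIter_append_singleton (T : Set Str) (u : Str) (i : Bool) :
    splitIter T (u ++ [i]) = splitOne (splitIter T u) i :=
  foldl_concat _ _ _ _

theorem IsFSS.restrict {P : Set (Set Str)} {m n : ℕ} {φ ψ : Str → Set Str} (hφ : IsFSS P m φ)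
    (hnm : n ≤ m) (heq : ∀ s : Str, s.length ≤ n → ψ s = φ s) : IsFSS P n ψ := by
  refine ⟨fun s hs => heq s hs ▸ hφ.1 s (hs.trans hnm), fun s i hs => ?_⟩
  rw [heq s hs.le, heq (s ++ [i]) (by simpa using hs)]
  exact hφ.2 s i (hs.trans_le hnm)

namespace IsPTF

variable {P : Set (Set Str)} (hP : IsPTF P)
include hP

theorem splitOne_mem {T : Set Str} (hT : T ∈ P) (i : Bool) : splitOne T i ∈ P :=
  hP.2.2 T hT _ ((hP.2.1 T hT).stem_append_mem i)

theorem splitIter_mem {T : Set Str} (hT : T ∈ P) (u : Str) : splitIter T u ∈ P := by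
  induction u using reverseRecOn with
  | nil => exact hT
  | append_singleton u i ih => rw [splitIter_append_singleton]; exact hP.splitOne_mem ih i

theorem isFSS_splitIter {T : Set Str} (hT : T ∈ P) (n : ℕ) : IsFSS P n (splitIter T) :=
  ⟨fun s _ => hP.splitIter_mem hT s, fun s i _ => (splitIter_append_singleton T s i).subset⟩

theorem exists_strictMono_isFSS : ∃ (phi : ℕ → Str → Set Str) (h : ℕ → ℕ),
    ∀ n : ℕ, IsFSS P (h n) (phi n) ∧ h n < h (n + 1) ∧
      ∀ s : Str, s.length ≤ h n → phi (n + 1) s = phi n s := by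
  obtain ⟨T, hT⟩ := hP.1
  exact ⟨fun _ => splitIter T, id,
    fun n => ⟨hP.isFSS_splitIter hT n, n.lt_succ_self, fun _ _ => rfl⟩⟩

end IsPTF

structure IsSplittingSystem (ψ : Str → Set Str) : Prop where
  isPerfectTree : ∀ s, IsPerfectTree (ψ s)
  subset_splitOne : ∀ s i, ψ (s ++ [i]) ⊆ splitOne (ψ s) i

def fusion (ψ : Str → Set Str) : Set Str := ⋂ n : ℕ, ⋃ (s : Str) (_ : s.length = n), ψ s

theorem mem_fusion {ψ : Str → Set Str} {t : Str} :
    t ∈ fusion ψ ↔ ∀ n, ∃ s, s.length = n ∧ t ∈ ψ s := by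
  simp [fusion]

theorem fusion_subset_nil (ψ : Str → Set Str) : fusion ψ ⊆ ψ [] := fun t ht => by
  obtain ⟨s, hs, hts⟩ := mem_fusion.mp ht 0
  rwa [length_eq_zero_iff.mp hs] at hts

namespace IsSplittingSystem

variable {ψ : Str → Set Str} (hψ : IsSplittingSystem ψ)
include hψ

theorem mem_of_prefix_stem {s t : Str} (h : t <+: stem (ψ s)) : t ∈ ψ s :=
  (hψ.isPerfectTree s).2.1 h (hψ.isPerfectTree s).stem_mem

theorem antitone {s s' : Str} (h : s <+: s') : ψ s' ⊆ ψ s := by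
  obtain ⟨r, rfl⟩ := h
  induction r using reverseRecOn with
  | nil => simp
  | append_singleton r i ih =>
    rw [← append_assoc]
    exact fun t ht => ih (hψ.subset_splitOne _ i ht).1

theorem stem_append_prefix (s : Str) (i : Bool) :
    stem (ψ s) ++ [i] <+: stem (ψ (s ++ [i])) := by
  have hT := hψ.isPerfectTree (s ++ [i])
  have hcomp : ∀ t ∈ ψ (s ++ [i]), stem (ψ s) ++ [i] <+: t ∨ t <+: stem (ψ s) ++ [i] :=
    fun t ht => (hψ.subset_splitOne s i ht).2
  obtain ⟨t, ht, hlen⟩ := hT.exists_length_le ((stem (ψ s)).length + 2)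
  have hmem : stem (ψ s) ++ [i] ∈ ψ (s ++ [i]) := by
    refine hT.2.1 ((hcomp t ht).resolve_right fun h => ?_) ht
    have := h.length_le
    simp at this
    omega
  exact hT.isStem_stem.2.2 _ hmem (tres_eq_self hcomp).symm

theorem stem_mono {s s' : Str} (h : s <+: s') : stem (ψ s) <+: stem (ψ s') := by
  obtain ⟨r, rfl⟩ := h
  induction r using reverseRecOn with
  | nil => simp
  | append_singleton r i ih =>
    rw [← append_assoc]
    exact ih.trans ((prefix_append _ _).trans (hψ.stem_append_prefix _ i))

theorem length_le_length_stem (s : Str) : s.length ≤ (stem (ψ s)).length := by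
  induction s using reverseRecOn with
  | nil => exact Nat.zero_le _
  | append_singleton s i ih =>
    have := (hψ.stem_append_prefix s i).length_le
    simp at this ⊢
    omega

theorem not_stem_append_prefix {s : Str} {i j : Bool} (hij : i ≠ j) :
    ¬ stem (ψ (s ++ [i])) <+: stem (ψ (s ++ [j])) := fun h =>
  hij (eq_of_append_singleton_prefix ((hψ.stem_append_prefix s i).trans h)
    (hψ.stem_append_prefix s j) rfl).2

theorem stem_append_prefix_of_prefix {r s : Str} {i b : Bool} (h : r ++ [i] <+: s ++ [b]) :
    stem (ψ r) ++ [i] <+: stem (ψ s) ++ [b] := by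
  rcases prefix_concat_iff.mp h with h | h
  · rw [append_singleton_inj.mp h |>.1, append_singleton_inj.mp h |>.2]
  · exact (hψ.stem_append_prefix r i).trans ((hψ.stem_mono h).trans (prefix_append _ _))

theorem eq_append_of_mem {s s' t : Str} {b : Bool} (hlen : s'.length = s.length + 1)
    (ht : t ∈ ψ s') (hb : stem (ψ s) ++ [b] <+: t) : s' = s ++ [b] := by
  by_contra hne
  obtain ⟨r, i, j, hij, hi, hj⟩ := exists_branch_point (x := s ++ [b]) (y := s')
    (fun h => hne (h.eq_of_length (by simp [hlen])).symm)
    (fun h => hne (h.eq_of_length (by simp [hlen])))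
  have hri : stem (ψ r) ++ [i] <+: t := (hψ.stem_append_prefix_of_prefix hi).trans hb
  rcases (hψ.subset_splitOne r j (hψ.antitone hj ht)).2 with h | h
  · exact hij (eq_of_append_singleton_prefix hri h rfl).2
  · exact hij (eq_of_append_singleton_prefix (hri.trans h) prefix_rfl rfl).2

theorem stem_mem_fusion (s : Str) : stem (ψ s) ∈ fusion ψ := by
  refine mem_fusion.mpr fun n => ?_
  rcases le_or_gt n s.length with h | h
  · exact ⟨s.take n, by simp [h], hψ.antitone (take_prefix _ _) (hψ.isPerfectTree s).stem_mem⟩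
  · exact ⟨s ++ replicate (n - s.length) false, by simp; omega,
      hψ.mem_of_prefix_stem (hψ.stem_mono (prefix_append _ _))⟩

theorem isTree_fusion : IsTree (fusion ψ) := fun _ _ hst ht =>
  mem_fusion.mpr fun n =>
    (mem_fusion.mp ht n).imp fun s ⟨hl, hts⟩ => ⟨hl, (hψ.isPerfectTree s).2.1 hst hts⟩

theorem mem_append_of_mem_fusion {s t : Str} {b : Bool} (ht : t ∈ fusion ψ)
    (hb : stem (ψ s) ++ [b] <+: t) : t ∈ ψ (s ++ [b]) := by
  obtain ⟨s', hl, hts'⟩ := mem_fusion.mp ht (s.length + 1)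
  rwa [← hψ.eq_append_of_mem hl hts' hb]

theorem exists_mem_append_of_mem_fusion {s t : Str} (htT : t ∈ fusion ψ) (hts : t ∈ ψ s) :
    ∃ i, t ∈ ψ (s ++ [i]) := by
  by_cases h : t <+: stem (ψ s)
  · exact ⟨false, hψ.mem_of_prefix_stem
      (h.trans ((prefix_append _ _).trans (hψ.stem_append_prefix s false)))⟩
  · obtain ⟨b, hb⟩ := exists_append_singleton_prefix
      (((hψ.isPerfectTree s).prefix_stem_or_stem_prefix hts).resolve_left h) h
    exact ⟨b, hψ.mem_append_of_mem_fusion htT hb⟩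

theorem fusion_inter_eq_iInter (u : Str) :
    fusion ψ ∩ ψ u =
      ⋂ (n : ℕ) (_ : u.length ≤ n), ⋃ (s : Str) (_ : s.length = n ∧ u <+: s), ψ s := by
  ext t
  simp only [Set.mem_inter_iff, Set.mem_iInter, Set.mem_iUnion]
  constructor
  · rintro ⟨htT, htu⟩ n hn
    induction n, hn using Nat.le_induction with
    | base => exact ⟨u, ⟨rfl, prefix_rfl⟩, htu⟩
    | succ n _ ih =>
      obtain ⟨s, ⟨hl, hus⟩, hts⟩ := ih
      obtain ⟨i, hi⟩ := hψ.exists_mem_append_of_mem_fusion htT hts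
      exact ⟨s ++ [i], ⟨by simp [hl], hus.trans (prefix_append _ _)⟩, hi⟩
  · intro ht
    obtain ⟨s, ⟨hl, hus⟩, hts⟩ := ht u.length le_rfl
    have htu : t ∈ ψ u := hus.eq_of_length hl.symm ▸ hts
    refine ⟨mem_fusion.mpr fun n => ?_, htu⟩
    rcases le_or_gt u.length n with h | h
    · obtain ⟨s, ⟨hl, -⟩, hts⟩ := ht n h
      exact ⟨s, hl, hts⟩
    · exact ⟨u.take n, by simp [h.le], hψ.antitone (take_prefix _ _) htu⟩

theorem isStem_fusion_inter (u : Str) : IsStem (fusion ψ ∩ ψ u) (stem (ψ u)) :=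
  isStem_of_append_mem ⟨hψ.stem_mem_fusion u, (hψ.isPerfectTree u).stem_mem⟩
    (fun _ ht => ((hψ.isPerfectTree u).prefix_stem_or_stem_prefix ht.2).symm)
    fun i => ⟨hψ.isTree_fusion (hψ.stem_append_prefix u i) (hψ.stem_mem_fusion _),
      (hψ.isPerfectTree u).stem_append_mem i⟩

theorem tres_fusion_inter (u : Str) (b : Bool) :
    Tres (fusion ψ ∩ ψ u) (stem (ψ u) ++ [b]) = fusion ψ ∩ ψ (u ++ [b]) := by
  ext t
  constructor
  · rintro ⟨⟨htT, -⟩, h | h⟩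
    · exact ⟨htT, hψ.mem_append_of_mem_fusion htT h⟩
    · exact ⟨htT, hψ.mem_of_prefix_stem (h.trans (hψ.stem_append_prefix u b))⟩
  · rintro ⟨htT, htub⟩
    exact ⟨⟨htT, hψ.antitone (prefix_append _ _) htub⟩, (hψ.subset_splitOne u b htub).2⟩

theorem splitIter_fusion (u : Str) : splitIter (fusion ψ) u = fusion ψ ∩ ψ u := by
  induction u using reverseRecOn with
  | nil => exact (Set.inter_eq_self_of_subset_left (fusion_subset_nil ψ)).symm
  | append_singleton u b ih =>
    rw [splitIter_append_singleton, ih, splitOne, (hψ.isStem_fusion_inter u).stem_eq,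
      hψ.tres_fusion_inter]

theorem isPerfectTree_fusion : IsPerfectTree (fusion ψ) := by
  refine ⟨⟨_, hψ.stem_mem_fusion []⟩, hψ.isTree_fusion, fun t ht => ?_⟩
  obtain ⟨s, hl, hts⟩ := mem_fusion.mp ht t.length
  have hst : t <+: stem (ψ s) := by
    rcases (hψ.isPerfectTree s).prefix_stem_or_stem_prefix hts with h | h
    · exact h
    · have := hψ.length_le_length_stem s
      exact (h.eq_of_length_le (by omega)) ▸ prefix_rfl
  have hext : ∀ i, t <+: stem (ψ (s ++ [i])) := fun i =>
    hst.trans ((prefix_append _ _).trans (hψ.stem_append_prefix s i))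
  exact ⟨_, _, hψ.stem_mem_fusion (s ++ [false]), hψ.stem_mem_fusion (s ++ [true]),
    hext false, hext true, hψ.not_stem_append_prefix (by decide),
    hψ.not_stem_append_prefix (by decide)⟩

theorem exists_mem_branches_of_mem_branches_fusion {a : Pt} (ha : a ∈ branches (fusion ψ))
    (n : ℕ) : ∃ s, s.length = n ∧ a ∈ branches (ψ s) := by
  induction n with
  | zero => exact ⟨[], rfl, fun k => fusion_subset_nil ψ (ha k)⟩
  | succ n ih =>
    obtain ⟨s, hl, has⟩ := ih
    set m := (stem (ψ s)).length
    have hstem : stem (ψ s) ++ [a m] <+: seg a (m + 1) := by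
      rw [seg_succ, (hψ.isPerfectTree s).seg_stem_of_mem_branches has]
    refine ⟨s ++ [a m], by simp [hl], fun k => ?_⟩
    have hk : seg a (max k (m + 1)) ∈ ψ (s ++ [a m]) := hψ.mem_append_of_mem_fusion (ha _)
      (hstem.trans (seg_prefix_seg a (le_max_right _ _)))
    exact (hψ.isPerfectTree _).2.1 (seg_prefix_seg a (le_max_left _ _)) hk

theorem branches_fusion :
    branches (fusion ψ) = ⋂ n : ℕ, ⋃ (s : Str) (_ : s.length = n), branches (ψ s) := by
  ext a
  simp only [Set.mem_iInter, Set.mem_iUnion]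
  constructor
  · intro ha n
    obtain ⟨s, hl, has⟩ := hψ.exists_mem_branches_of_mem_branches_fusion ha n
    exact ⟨s, hl, has⟩
  · intro ha k
    exact mem_fusion.mpr fun n => (ha n).imp fun s ⟨hl, has⟩ => ⟨hl, has k⟩

end IsSplittingSystem

/-- Lemma 2.11 (infty): existence of strictly increasing sequences of finite
splitting systems over `P`, and the properties of the limit system and of
the fusion tree `T = ⋂ₙ ⋃_{|s|=n} T_s`. -/
theorem stmt11 (P : Set (Set Str)) (hP : IsPTF P) :
    (∃ (phi : ℕ → Str → Set Str) (h : ℕ → ℕ),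
      ∀ n : ℕ, IsFSS P (h n) (phi n) ∧ h n < h (n + 1) ∧
        ∀ s : Str, s.length ≤ h n → phi (n + 1) s = phi n s) ∧
    (∀ (phi : ℕ → Str → Set Str) (h : ℕ → ℕ),
      (∀ n : ℕ, IsFSS P (h n) (phi n) ∧ h n < h (n + 1) ∧
        ∀ s : Str, s.length ≤ h n → phi (n + 1) s = phi n s) →
      ∀ psi : Str → Set Str,
        (∀ (n : ℕ) (s : Str), s.length ≤ h n → psi s = phi n s) →
        (∀ s : Str, psi s ∈ P) ∧
        (∀ (s : Str) (i : Bool), psi (s ++ [i]) ⊆ splitOne (psi s) i) ∧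
        IsPerfectTree (⋂ n : ℕ, ⋃ (s : Str) (_ : s.length = n), psi s) ∧
        branches (⋂ n : ℕ, ⋃ (s : Str) (_ : s.length = n), psi s)
          = (⋂ n : ℕ, ⋃ (s : Str) (_ : s.length = n), branches (psi s)) ∧
        ∀ u : Str,
          splitIter (⋂ n : ℕ, ⋃ (s : Str) (_ : s.length = n), psi s) u
            = (⋂ n : ℕ, ⋃ (s : Str) (_ : s.length = n), psi s) ∩ psi u ∧
          (⋂ n : ℕ, ⋃ (s : Str) (_ : s.length = n), psi s) ∩ psi u
            = ⋂ (n : ℕ) (_ : u.length ≤ n),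
                ⋃ (s : Str) (_ : s.length = n ∧ u <+: s), psi s) := by
  refine ⟨hP.exists_strictMono_isFSS, fun phi h hphi psi hpsi => ?_⟩
  have hh : StrictMono h := strictMono_nat_of_lt_succ fun n => (hphi n).2.1
  have hfss : ∀ n, IsFSS P n psi := fun n =>
    (hphi n).1.restrict hh.le_apply fun s hs => hpsi n s (hs.trans hh.le_apply)
  have hmem : ∀ s, psi s ∈ P := fun s => (hfss s.length).1 s le_rfl
  have hsplit : ∀ s i, psi (s ++ [i]) ⊆ splitOne (psi s) i := fun s i =>
    (hfss (s.length + 1)).2 s i (Nat.lt_succ_self _)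
  have hψ : IsSplittingSystem psi := ⟨fun s => hP.2.1 _ (hmem s), hsplit⟩
  exact ⟨hmem, hsplit, hψ.isPerfectTree_fusion, hψ.branches_fusion,
    fun u => ⟨hψ.splitIter_fusion u, hψ.fusion_inter_eq_iInter u⟩⟩

end
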